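/- For L ≥ 2, the entries of the transfer matrix t(v) are polynomials in v, t(0) is invertible, and the logarithmic derivative at v = 0 is the sum of adjacent permutation operators: t(0)^{-1} · (d/dv t(v))|_{v=0} = Σ_{j=1}^{L} P_{j,j+1}, where P_{j,j+1} permutes the j-th and (j+1)-th tensor factors of V^{⊗L} and indices are cyclic (P_{L,L+1} := P_{L,1}). Equivalently, t(v) = t(0)·(id + v Σ_{j=1}^{L} P_{j,j+1} + O(v²)). -/

import Mathlib

open Complex

/-- The rational `su(n)` R-matrix `R(v) = v·id + P` on `V ⊗ V`, `V = ℂ^n`, in components: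
`R(v)^{a′b′}_{ab} = v δ_{a a′} δ_{b b′} + δ_{a′ b} δ_{a b′}`. Row `(a′,b′)`, column `(a,b)`. -/
noncomputable def Rmat (n : ℕ) (v : ℂ) :
    Matrix (Fin n × Fin n) (Fin n × Fin n) ℂ := fun p q =>
  (if p.1 = q.1 then v else 0) * (if p.2 = q.2 then 1 else 0) +
    (if p.1 = q.2 then 1 else 0) * (if p.2 = q.1 then 1 else 0)

/-- Cyclic successor `j ↦ j + 1 (mod L)` on `Fin L`. -/
def cyc {L : ℕ} (j : Fin L) : Fin L := ⟨(j.1 + 1) % L, Nat.mod_lt _ j.pos⟩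

/-- The row-to-row transfer matrix `t(v)` of the rational `su(n)` model on `V^{⊗L}`. -/
noncomputable def transferMatrix (n L : ℕ) (v : ℂ) :
    Matrix (Fin L → Fin n) (Fin L → Fin n) ℂ := fun α β =>
  ∑ ν : Fin L → Fin n, ∏ j : Fin L, Rmat n v (ν (cyc j), α j) (ν j, β j)

/-- The permutation operator `P_{j,j+1}` exchanging the `j`-th and `(j+1)`-th tensor
factors of `V^{⊗L}` (indices cyclic, so `P_{L,L+1} = P_{L,1}`). -/
noncomputable def permMat (n L : ℕ) (j : Fin L) :
    Matrix (Fin L → Fin n) (Fin L → Fin n) ℂ := fun α β =>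
  if α = β ∘ (Equiv.swap j (cyc j)) then 1 else 0

/-!
At `v = 0` every factor `R(0)` is the permutation `P`, which forces the auxiliary indices to
`ν = α` and makes `t(0)` the cyclic shift `α ↦ α ∘ (j ↦ j + 1)`, a permutation matrix. Each
entry of `t(v)` is a sum of products of affine functions of `v`, so `t′(0)` is the sum over the
sites `k` of the terms in which the factor at `k` is replaced by the identity. For `k = j + 1`
the auxiliary indices are again forced (to `α` except `ν_k = α_{k+1}`, which needs `k + 1 ≠ k`,
i.e. `L ≥ 2`), and the surviving term is the entry of `t(0) · P_{j,j+1}`.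
-/

open Equiv Finset

namespace Equiv.Perm

variable {ι : Type*}

def precomp (κ : Type*) (σ : Perm ι) : Perm (ι → κ) :=
  σ.symm.arrowCongr (Equiv.refl κ)

variable {κ : Type*}

@[simp]
lemma precomp_apply (σ : Perm ι) (α : ι → κ) : σ.precomp κ α = α ∘ σ :=
  rfl

lemma precomp_mul (σ τ : Perm ι) : (σ * τ).precomp κ = τ.precomp κ * σ.precomp κ :=
  rfl

lemma permMatrix_precomp_apply {R : Type*} [Fintype ι] [DecidableEq ι] [DecidableEq κ] [Zero R]
    [One R] (σ : Perm ι) (α β : ι → κ) :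
    (σ.precomp κ).permMatrix R α β = if α ∘ σ = β then 1 else 0 := by
  simp

end Equiv.Perm

lemma Matrix.isUnit_permMatrix {ι R : Type*} [Fintype ι] [DecidableEq ι] [Semiring R]
    (σ : Perm ι) : IsUnit (σ.permMatrix R) := by
  simpa using (Group.isUnit σ⁻¹).map (Matrix.permMatrixHom (n := ι) (R := R))

section AuxiliarySums

variable {ι κ R : Type*} [Fintype ι] [DecidableEq ι] [Fintype κ] [DecidableEq κ]
  [CommSemiring R]

lemma sum_prod_ite_swap (σ : Perm ι) (α β : ι → κ) :
    ∑ ν : ι → κ, ∏ i, (if (ν (σ i), α i) = (β i, ν i) then (1 : R) else 0) =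
      if α ∘ σ = β then 1 else 0 := by
  have key : ∀ ν : ι → κ, (∀ i, (ν (σ i), α i) = (β i, ν i)) ↔ ν = α ∧ α ∘ σ = β := by
    intro ν
    simp only [Prod.mk.injEq, funext_iff, Function.comp_apply]
    grind
  simp only [Fintype.prod_boole, key, ite_and, sum_ite_eq', mem_univ, if_true]

lemma sum_prod_erase_ite_swap (σ : Perm ι) (α β : ι → κ) {j : ι} (hj : σ j ≠ j) :
    ∑ ν : ι → κ,
        (∏ i ∈ univ.erase (σ j), (if (ν (σ i), α i) = (β i, ν i) then (1 : R) else 0)) *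
          (if (ν (σ (σ j)), α (σ j)) = (ν (σ j), β (σ j)) then 1 else 0) =
      if α ∘ σ ∘ swap j (σ j) = β then 1 else 0 := by
  have key : ∀ ν : ι → κ, ((∀ i ∈ univ.erase (σ j), (ν (σ i), α i) = (β i, ν i)) ∧
      (ν (σ (σ j)), α (σ j)) = (ν (σ j), β (σ j))) ↔
      ν = Function.update α (σ j) (α (σ (σ j))) ∧ α ∘ σ ∘ swap j (σ j) = β := by
    intro ν
    simp only [mem_erase, mem_univ, and_true, Prod.mk.injEq, funext_iff, Function.comp_apply,
      Function.update_apply, swap_apply_def]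
    grind [Equiv.apply_eq_iff_eq]
  simp only [prod_boole, ite_zero_mul_ite_zero, mul_one, key, ite_and, sum_ite_eq', mem_univ,
    if_true]

end AuxiliarySums

lemma hasDerivAt_prod_mul_add {ι 𝕜 : Type*} [DecidableEq ι] [NontriviallyNormedField 𝕜]
    (s : Finset ι) (a b : ι → 𝕜) :
    HasDerivAt (fun v => ∏ i ∈ s, (v * a i + b i)) (∑ i ∈ s, (∏ j ∈ s.erase i, b j) * a i) 0 := by
  simpa using HasDerivAt.fun_finsetProd (u := s) (x := (0 : 𝕜))
    fun i _ => ((hasDerivAt_id (0 : 𝕜)).mul_const (a i)).add_const (b i)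

lemma cyc_eq_finRotate {L : ℕ} (j : Fin L) : cyc j = finRotate L j := by
  ext
  simp [cyc, finRotate_apply, Fin.val_add]

lemma finRotate_apply_ne_self {L : ℕ} (hL : 2 ≤ L) (j : Fin L) : finRotate L j ≠ j := by
  obtain ⟨m, rfl⟩ : ∃ m, L = m + 2 := ⟨L - 2, by omega⟩
  exact Perm.mem_support.mp (support_finRotate ▸ mem_univ j)

lemma Rmat_apply (n : ℕ) (v : ℂ) (p q : Fin n × Fin n) :
    Rmat n v p q = v * (if p = q then 1 else 0) + if p = q.swap then 1 else 0 := by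
  obtain ⟨a, b⟩ := p
  obtain ⟨c, d⟩ := q
  simp only [Rmat, Prod.mk.injEq, Prod.swap_prod_mk]
  grind

lemma transferMatrix_apply (n L : ℕ) (v : ℂ) (α β : Fin L → Fin n) :
    transferMatrix n L v α β = ∑ ν : Fin L → Fin n, ∏ j,
      (v * (if (ν (finRotate L j), α j) = (ν j, β j) then 1 else 0) +
        if (ν (finRotate L j), α j) = (β j, ν j) then 1 else 0) := by
  simp only [transferMatrix, Rmat_apply, cyc_eq_finRotate, Prod.swap_prod_mk]

lemma exists_polynomial_transferMatrix_apply (n L : ℕ) (α β : Fin L → Fin n) :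
    ∃ p : Polynomial ℂ, ∀ v, transferMatrix n L v α β = p.eval v := by
  refine ⟨∑ ν : Fin L → Fin n, ∏ j,
    (Polynomial.X * Polynomial.C (if (ν (finRotate L j), α j) = (ν j, β j) then 1 else 0) +
      Polynomial.C (if (ν (finRotate L j), α j) = (β j, ν j) then 1 else 0)), fun v => ?_⟩
  simp only [transferMatrix_apply, Polynomial.eval_finsetSum, Polynomial.eval_prod,
    Polynomial.eval_add, Polynomial.eval_mul, Polynomial.eval_X, Polynomial.eval_C]

lemma transferMatrix_zero_eq_permMatrix (n L : ℕ) :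
    transferMatrix n L 0 = ((finRotate L).precomp (Fin n)).permMatrix ℂ := by
  ext α β
  simp only [transferMatrix_apply, zero_mul, zero_add, Perm.permMatrix_precomp_apply,
    sum_prod_ite_swap]

lemma permMat_eq_permMatrix (n L : ℕ) (j : Fin L) :
    permMat n L j = ((swap j (finRotate L j)).precomp (Fin n)).permMatrix ℂ := by
  ext α β
  rw [permMat, Perm.permMatrix_precomp_apply, cyc_eq_finRotate]
  exact if_congr (by rw [← eq_comp_symm, symm_swap]) rfl rfl

lemma deriv_transferMatrix_apply {n L : ℕ} (hL : 2 ≤ L) (α β : Fin L → Fin n) :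
    deriv (fun v => transferMatrix n L v α β) 0 =
      (transferMatrix n L 0 * ∑ j, permMat n L j) α β := by
  simp_rw [transferMatrix_apply]
  rw [(HasDerivAt.fun_sum fun ν _ => hasDerivAt_prod_mul_add _ _ _).deriv, Finset.sum_comm,
    Matrix.mul_sum, Matrix.sum_apply, ← Equiv.sum_comp (finRotate L)]
  refine Finset.sum_congr rfl fun j _ => ?_
  rw [sum_prod_erase_ite_swap _ _ _ (finRotate_apply_ne_self hL j),
    transferMatrix_zero_eq_permMatrix, permMat_eq_permMatrix, ← Matrix.permMatrix_mul,
    ← Perm.precomp_mul, Perm.permMatrix_precomp_apply, Perm.coe_mul]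

theorem transferMatrix_log_deriv_general (n L : ℕ) (hL : 2 ≤ L) :
    (∀ α β, ∃ p : Polynomial ℂ, ∀ v : ℂ, transferMatrix n L v α β = p.eval v) ∧
    IsUnit (transferMatrix n L 0) ∧
    (transferMatrix n L 0)⁻¹ *
        (Matrix.of fun α β => deriv (fun v : ℂ => transferMatrix n L v α β) 0) =
      ∑ j : Fin L, permMat n L j := by
  have hunit : IsUnit (transferMatrix n L 0) :=
    transferMatrix_zero_eq_permMatrix n L ▸ Matrix.isUnit_permMatrix _
  refine ⟨exists_polynomial_transferMatrix_apply n L, hunit, ?_⟩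
  have hderiv : Matrix.of (fun α β => deriv (fun v => transferMatrix n L v α β) 0) =
      transferMatrix n L 0 * ∑ j, permMat n L j :=
    Matrix.ext (deriv_transferMatrix_apply hL)
  rw [hderiv, Matrix.nonsing_inv_mul_cancel_left _ _ ((Matrix.isUnit_iff_isUnit_det _).mp hunit)]

/-- For `L ≥ 2`: the entries of `t(v)` are polynomials in `v`, `t(0)` is invertible, and the
logarithmic derivative at `v = 0` is the sum of adjacent transposition operators:
`t(0)⁻¹ · t′(0) = Σ_{j=1}^{L} P_{j,j+1}` (cyclic indices). -/
theorem transferMatrix_log_deriv (n L : ℕ) (hn : 1 ≤ n) (hL : 2 ≤ L) :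
    (∀ α β, ∃ p : Polynomial ℂ, ∀ v : ℂ, transferMatrix n L v α β = p.eval v) ∧
    IsUnit (transferMatrix n L 0) ∧
    (transferMatrix n L 0)⁻¹ *
        (Matrix.of fun α β => deriv (fun v : ℂ => transferMatrix n L v α β) 0) =
      ∑ j : Fin L, permMat n L j :=
  transferMatrix_log_deriv_general n L hL
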